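/- Suppose $(\alpha,\beta)$ is a Bailey pair relative to $a$. Then for any nonnegative integer $M$, $\sum_{L=0}^M \frac{a^L q^{L^2}}{(q)_{M-L}(aq)_{M+L}} \alpha_L = \sum_{L=0}^M \frac{a^L q^{L^2}}{(q)_{M-L}} \beta_L$. -/

import Mathlib

/-!
Writing `β` in terms of `α` and exchanging the order of summation, the coefficient of `α i`
on the right-hand side is `∑_{L=i}^M a^L q^{L²} / ((q)_{M-L} (q)_{L-i} (aq)_{L+i})`.
Putting `L = i + k` and `b = a q^{2i}`, this is `a^i q^{i²} / (aq)_{2i}` times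
`∑_k b^k q^{k²} / ((q)_k (q)_{n-k} (bq)_k) = 1 / ((q)_n (bq)_n)` with `n = M - i`.
Cleared of denominators the latter is the polynomial identity
`∑_k [n, k]_q q^{k²} b^k (b q^{k+1})_{n-k} = 1`, whose left-hand side at `(n + 1, b)` reduces to
its value at `(n, b q)` by the `q`-Pascal rule.
-/

open Finset

/-- The $q$-Pochhammer symbol $(x;q)_n$. -/
noncomputable def qp (q x : ℂ) (n : ℕ) : ℂ := ∏ k ∈ Finset.range n, (1 - x * q ^ k)

section Pochhammer

variable (q x : ℂ)

@[simp]
lemma qp_zero : qp q x 0 = 1 := prod_range_zero _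

lemma qp_succ (n : ℕ) : qp q x (n + 1) = qp q x n * (1 - x * q ^ n) :=
  prod_range_succ _ n

lemma qp_succ' (n : ℕ) : qp q x (n + 1) = (1 - x) * qp q (x * q) n := by
  rw [qp, prod_range_succ', pow_zero, mul_one, mul_comm, qp]
  exact congrArg (_ * ·) (prod_congr rfl fun k _ => by ring)

lemma qp_add (m n : ℕ) : qp q x (m + n) = qp q x m * qp q (x * q ^ m) n := by
  rw [qp, prod_range_add, qp, qp]
  exact congrArg (_ * ·) (prod_congr rfl fun k _ => by ring)

lemma qp_ne_zero_of_le {k n : ℕ} (hkn : k ≤ n) (h : qp q x n ≠ 0) : qp q x k ≠ 0 := by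
  obtain ⟨d, rfl⟩ := Nat.exists_eq_add_of_le hkn
  exact left_ne_zero_of_mul (qp_add q x k d ▸ h)

end Pochhammer

/-- The Gaussian binomial coefficient `[n, j]_q`, defined by the `q`-Pascal rule. -/
noncomputable def qBinom (q : ℂ) : ℕ → ℕ → ℂ
  | _, 0 => 1
  | 0, _ + 1 => 0
  | n + 1, j + 1 => qBinom q n j + q ^ (j + 1) * qBinom q n (j + 1)

section GaussianBinomial

variable (q : ℂ)

lemma qBinom_eq_zero_of_lt : ∀ {n j : ℕ}, n < j → qBinom q n j = 0
  | 0, _ + 1, _ => rfl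
  | n + 1, j + 1, h => by
    rw [qBinom, qBinom_eq_zero_of_lt (by omega), qBinom_eq_zero_of_lt (by omega), mul_zero,
      add_zero]

lemma qBinom_mul_qp_mul_qp : ∀ {n j : ℕ}, j ≤ n →
    qBinom q n j * qp q q j * qp q q (n - j) = qp q q n
  | n, 0, _ => by simp [qBinom]
  | n + 1, j + 1, h => by
    rw [qBinom, Nat.add_sub_add_right, qp_succ q q j, qp_succ q q n]
    rcases Nat.lt_or_eq_of_le (Nat.le_of_succ_le_succ h) with hj | rfl
    · obtain ⟨m, rfl⟩ := Nat.exists_eq_add_of_lt hj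
      have ih₁ := qBinom_mul_qp_mul_qp (n := j + m + 1) (j := j) (by omega)
      have ih₂ := qBinom_mul_qp_mul_qp (n := j + m + 1) (j := j + 1) (by omega)
      rw [show j + m + 1 - j = m + 1 by omega, qp_succ] at ih₁
      rw [show j + m + 1 - (j + 1) = m by omega, qp_succ] at ih₂
      rw [show j + m + 1 - j = m + 1 by omega, qp_succ]
      linear_combination (1 - q * q ^ j) * ih₁ + q ^ (j + 1) * (1 - q * q ^ m) * ih₂
    · have ih := qBinom_mul_qp_mul_qp (n := j) (j := j) le_rfl
      rw [Nat.sub_self, qp_zero] at ih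
      rw [qBinom_eq_zero_of_lt q j.lt_succ_self, Nat.sub_self, qp_zero]
      linear_combination (1 - q * q ^ j) * ih

end GaussianBinomial

noncomputable def qBinomTerm (q b : ℂ) (n j : ℕ) : ℂ :=
  qBinom q n j * q ^ (j ^ 2) * b ^ j * qp q (b * q ^ (j + 1)) (n - j)

lemma sum_qBinomTerm_succ (q b : ℂ) (n : ℕ) :
    ∑ j ∈ range (n + 2), qBinomTerm q b (n + 1) j =
      ∑ j ∈ range (n + 1), qBinomTerm q (b * q) n j := by
  set v : ℕ → ℂ := fun j => qBinom q n j * q ^ ((j + 1) ^ 2) * b ^ (j + 1) *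
    qp q (b * q ^ (j + 2)) (n - j) with hv
  set w : ℕ → ℂ := fun j => q ^ j * qBinom q n j * q ^ (j ^ 2) * b ^ j *
    qp q (b * q ^ (j + 1)) (n + 1 - j) with hw
  -- `v` and `w` are the two halves of the `q`-Pascal rule; `qp_succ'` splits `w` so that the
  -- `v`-terms cancel.
  have hpascal (k : ℕ) : qBinomTerm q b (n + 1) (k + 1) = v k + w (k + 1) := by
    simp only [qBinomTerm, qBinom, hv, hw, Nat.add_sub_add_right]
    ring
  have hw_eq (j : ℕ) (hj : j ≤ n) : w j = qBinomTerm q (b * q) n j - v j := by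
    simp only [qBinomTerm, hv, hw, Nat.succ_sub hj, qp_succ']
    rw [show b * q * q ^ (j + 1) = b * q ^ (j + 2) by ring,
      show b * q ^ (j + 1) * q = b * q ^ (j + 2) by ring]
    ring
  have hw_last : w (n + 1) = 0 := by simp [hw, qBinom_eq_zero_of_lt q n.lt_succ_self]
  calc ∑ j ∈ range (n + 2), qBinomTerm q b (n + 1) j
      = ∑ k ∈ range (n + 1), (v k + w (k + 1)) + w 0 := by
        rw [sum_range_succ', sum_congr rfl fun k _ => hpascal k]
        simp [qBinomTerm, qBinom, hw]
    _ = ∑ k ∈ range (n + 1), v k + ∑ j ∈ range (n + 2), w j := by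
        rw [sum_add_distrib, sum_range_succ' w, add_assoc]
    _ = ∑ k ∈ range (n + 1), v k + ∑ j ∈ range (n + 1), w j := by
        rw [sum_range_succ w (n + 1), hw_last, add_zero]
    _ = ∑ j ∈ range (n + 1), qBinomTerm q (b * q) n j := by
        rw [← sum_add_distrib]
        exact sum_congr rfl fun j hj => by rw [hw_eq j (mem_range_succ_iff.mp hj)]; ring

lemma sum_qBinomTerm_eq_one (q b : ℂ) (n : ℕ) :
    ∑ j ∈ range (n + 1), qBinomTerm q b n j = 1 := by
  induction n generalizing b with
  | zero => simp [qBinomTerm, qBinom]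
  | succ n ih => exact (sum_qBinomTerm_succ q b n).trans (ih (b * q))

lemma sum_div_qp_eq_one_div (q b : ℂ) {n : ℕ} (hq : qp q q n ≠ 0) (hb : qp q (b * q) n ≠ 0) :
    ∑ k ∈ range (n + 1), b ^ k * q ^ (k ^ 2) / (qp q q k * qp q q (n - k) * qp q (b * q) k) =
      1 / (qp q q n * qp q (b * q) n) := by
  rw [← sum_qBinomTerm_eq_one q b n, sum_div]
  refine sum_congr rfl fun k hk => ?_
  have hkn : k ≤ n := mem_range_succ_iff.mp hk
  have hqn : qp q q n = qBinom q n k * qp q q k * qp q q (n - k) :=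
    (qBinom_mul_qp_mul_qp q hkn).symm
  have hbn : qp q (b * q) n = qp q (b * q) k * qp q (b * q ^ (k + 1)) (n - k) := by
    rw [show b * q ^ (k + 1) = b * q * q ^ k by ring, ← qp_add, Nat.add_sub_cancel' hkn]
  have hden : qp q q k * qp q q (n - k) * qp q (b * q) k ≠ 0 :=
    mul_ne_zero (mul_ne_zero (qp_ne_zero_of_le q q hkn hq)
      (qp_ne_zero_of_le q q (Nat.sub_le n k) hq)) (qp_ne_zero_of_le q _ hkn hb)
  rw [div_eq_div_iff hden (mul_ne_zero hq hb), qBinomTerm, hqn, hbn]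
  ring

lemma sum_Ico_conjugate_bailey (q a : ℂ) {M i : ℕ} (hi : i ≤ M) (hq : qp q q (M - i) ≠ 0)
    (ha : qp q (a * q) (M + i) ≠ 0) :
    ∑ L ∈ Ico i (M + 1),
        a ^ L * q ^ (L ^ 2) / (qp q q (M - L) * (qp q q (L - i) * qp q (a * q) (L + i))) =
      a ^ i * q ^ (i ^ 2) / (qp q q (M - i) * qp q (a * q) (M + i)) := by
  set n := M - i
  set b := a * q ^ (2 * i)
  have hsplit (k : ℕ) : qp q (a * q) (2 * i + k) = qp q (a * q) (2 * i) * qp q (b * q) k := by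
    rw [qp_add, show a * q * q ^ (2 * i) = b * q by ring]
  have hMi : M + i = 2 * i + n := by omega
  have hb : qp q (b * q) n ≠ 0 := right_ne_zero_of_mul (hsplit n ▸ hMi ▸ ha)
  rw [sum_Ico_eq_sum_range, show M + 1 - i = n + 1 by omega]
  calc ∑ k ∈ range (n + 1), a ^ (i + k) * q ^ ((i + k) ^ 2) /
        (qp q q (M - (i + k)) * (qp q q (i + k - i) * qp q (a * q) (i + k + i)))
      = a ^ i * q ^ (i ^ 2) / qp q (a * q) (2 * i) * ∑ k ∈ range (n + 1),
          b ^ k * q ^ (k ^ 2) / (qp q q k * qp q q (n - k) * qp q (b * q) k) := by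
        rw [mul_sum]
        refine sum_congr rfl fun k _ => ?_
        rw [show M - (i + k) = n - k by omega, Nat.add_sub_cancel_left,
          show i + k + i = 2 * i + k by omega, hsplit]
        ring
    _ = a ^ i * q ^ (i ^ 2) / (qp q q (M - i) * qp q (a * q) (M + i)) := by
        rw [sum_div_qp_eq_one_div q b hq hb, hMi, hsplit]
        ring

/-- Bailey's lemma in the $\rho_1,\rho_2\to\infty$ specialization:
$\sum_{L=0}^M \frac{a^L q^{L^2}}{(q)_{M-L}(aq)_{M+L}}\alpha_L
 = \sum_{L=0}^M \frac{a^L q^{L^2}}{(q)_{M-L}}\beta_L$. -/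
theorem bailey_lemma_special (q a : ℂ) (α β : ℕ → ℂ)
    (hBP : ∀ L, β L = ∑ i ∈ Finset.range (L + 1),
      α i / (qp q q (L - i) * qp q (a * q) (L + i)))
    (hq0 : ∀ n : ℕ, qp q q n ≠ 0)
    (haq : ∀ n : ℕ, qp q (a * q) n ≠ 0)
    (M : ℕ) :
    ∑ L ∈ Finset.range (M + 1),
        a ^ L * q ^ (L ^ 2) / (qp q q (M - L) * qp q (a * q) (M + L)) * α L
      = ∑ L ∈ Finset.range (M + 1), a ^ L * q ^ (L ^ 2) / qp q q (M - L) * β L := by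
  calc _ = ∑ i ∈ range (M + 1), ∑ L ∈ Ico i (M + 1),
        a ^ L * q ^ (L ^ 2) / (qp q q (M - L) * (qp q q (L - i) * qp q (a * q) (L + i))) * α i := by
        refine sum_congr rfl fun i hi => ?_
        rw [← sum_mul, sum_Ico_conjugate_bailey q a (mem_range_succ_iff.mp hi)
          (hq0 _) (haq _)]
    _ = _ := by
        rw [range_eq_Ico, sum_Ico_Ico_comm, ← range_eq_Ico]
        refine sum_congr rfl fun L _ => ?_
        rw [hBP, mul_sum, ← range_eq_Ico]
        exact sum_congr rfl fun i _ => by ring
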